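/- Let k ≥ 3 be odd, let d be sufficiently large in terms of k and divisible by 3k², and set m = d/(3k²). Then the graph G_square is vertex-transitive, and it is connected with diameter at most 4kd. -/

import Mathlib

open MeasureTheory

noncomputable section

abbrev Vtx (d : ℕ) := Fin d → ZMod 2

/-- The hypercube graph `Q^d` on vertex set `{0,1}^d`. -/
def cubeGraph (d : ℕ) : SimpleGraph (Vtx d) where
  Adj u v := hammingDist u v = 1
  symm := by
    constructor
    intro u v h
    rwa [hammingDist_comm]
  loopless := by
    constructor
    intro u h
    simp [hammingDist_self] at h

/-- The graph `Q^d(k)`: vertices at Hamming distance exactly `k` are adjacent. -/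
def distGraph (d k : ℕ) : SimpleGraph (Vtx d) where
  Adj u v := u ≠ v ∧ hammingDist u v = k
  symm := by
    constructor
    intro u v h
    exact ⟨h.1.symm, by rw [hammingDist_comm]; exact h.2⟩
  loopless := by
    constructor
    intro u h
    exact h.1 rfl

/-- Embedding of `{0,1}^d` into `ℝ^d`. -/
def toR {d : ℕ} (v : Vtx d) : Fin d → ℝ := fun i => ((v i).val : ℝ)

/-- The set of retained vertices of a percolation configuration. -/
def retained {d : ℕ} (ω : Vtx d → Bool) : Set (Vtx d) := {v | ω v = true}

/-- `u v` is an edge of the polytope `conv S`. -/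
def IsPolytopeEdge {d : ℕ} (S : Set (Vtx d)) (u v : Vtx d) : Prop :=
  u ∈ S ∧ v ∈ S ∧ u ≠ v ∧ ∃ (f : (Fin d → ℝ) →ₗ[ℝ] ℝ) (c : ℝ),
    f (toR u) = c ∧ f (toR v) = c ∧ ∀ z ∈ S, z ≠ u → z ≠ v → c < f (toR z)

/-- The graph of the polytope `conv S`. -/
def polytopeGraph {d : ℕ} (S : Set (Vtx d)) : SimpleGraph (Vtx d) where
  Adj u v := IsPolytopeEdge S u v
  symm := by
    constructor
    rintro u v ⟨hu, hv, hne, f, c, h1, h2, h3⟩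
    exact ⟨hv, hu, hne.symm, f, c, h2, h1, fun z hz z1 z2 => h3 z hz z2 z1⟩
  loopless := by
    constructor
    rintro u ⟨-, -, hne, -⟩
    exact hne rfl

/-- Degree of a vertex in a graph. -/
def deg {V : Type*} (G : SimpleGraph V) (v : V) : ℕ := {u | G.Adj v u}.ncard

/-- External neighbourhood of a set in a graph. -/
def extNbhd {V : Type*} (G : SimpleGraph V) (S : Set V) : Set V :=
  {v | v ∉ S ∧ ∃ u ∈ S, G.Adj u v}

/-- Number of edges with exactly one endpoint in `S`. -/
def edgeBoundary {V : Type*} (G : SimpleGraph V) (S : Set V) : ℕ :=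
  {p : V × V | p.1 ∈ S ∧ p.2 ∉ S ∧ G.Adj p.1 p.2}.ncard

/-- Bernoulli measure on `Bool`. -/
def bern (p : ℝ) : Measure Bool :=
  ENNReal.ofReal p • Measure.dirac true + ENNReal.ofReal (1 - p) • Measure.dirac false

instance bern_finite (p : ℝ) : IsFiniteMeasure (bern p) := by
  constructor
  simp only [bern, Measure.coe_add, Pi.add_apply, Measure.smul_apply, smul_eq_mul]
  exact ENNReal.add_lt_top.2
    ⟨ENNReal.mul_lt_top ENNReal.ofReal_lt_top (measure_lt_top _ _),
     ENNReal.mul_lt_top ENNReal.ofReal_lt_top (measure_lt_top _ _)⟩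

/-- Product Bernoulli measure: each vertex of `{0,1}^d` retained independently w.p. `p`. -/
def vertexMeasure (d : ℕ) (p : ℝ) : Measure (Vtx d → Bool) :=
  Measure.pi fun _ => bern p

/-- Product Bernoulli measure on edge configurations. -/
def edgeMeasure (d : ℕ) (q : ℝ) : Measure (Sym2 (Vtx d) → Bool) :=
  Measure.pi fun _ => bern q

/-- Joint law of independent vertex- and edge-percolation configurations. -/
def mixedMeasure (d : ℕ) (p q : ℝ) :
    Measure ((Vtx d → Bool) × (Sym2 (Vtx d) → Bool)) :=
  (vertexMeasure d p).prod (edgeMeasure d q)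

/-- The induced subgraph `Q^d_p` of the hypercube given a vertex configuration. -/
def inducedGraph (d : ℕ) (f : Vtx d → Bool) : SimpleGraph (Vtx d) where
  Adj u v := (cubeGraph d).Adj u v ∧ f u = true ∧ f v = true
  symm := by
    constructor
    rintro u v ⟨h, hu, hv⟩
    exact ⟨(cubeGraph d).adj_symm h, hv, hu⟩
  loopless := ⟨fun u h => (cubeGraph d).loopless.irrefl u h.1⟩

/-- The mixed percolation `Q^d_{p,q}` given vertex and edge configurations. -/
def mixedGraph (d : ℕ) (f : Vtx d → Bool) (g : Sym2 (Vtx d) → Bool) :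
    SimpleGraph (Vtx d) where
  Adj u v := (cubeGraph d).Adj u v ∧ f u = true ∧ f v = true ∧ g s(u, v) = true
  symm := by
    constructor
    rintro u v ⟨h, hu, hv, he⟩
    refine ⟨(cubeGraph d).adj_symm h, hv, hu, ?_⟩
    rwa [Sym2.eq_swap]
  loopless := ⟨fun u h => (cubeGraph d).loopless.irrefl u h.1⟩

/-- The subgraph of `Q^d` with vertex set `U` and edges of `F` inside `U`. -/
def setGraph (d : ℕ) (U : Set (Vtx d)) (F : Set (Sym2 (Vtx d))) :
    SimpleGraph (Vtx d) where
  Adj u v := (cubeGraph d).Adj u v ∧ u ∈ U ∧ v ∈ U ∧ s(u, v) ∈ F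
  symm := by
    constructor
    rintro u v ⟨h, hu, hv, he⟩
    refine ⟨(cubeGraph d).adj_symm h, hv, hu, ?_⟩
    rwa [Sym2.eq_swap]
  loopless := ⟨fun u h => (cubeGraph d).loopless.irrefl u h.1⟩

/-- Indicator vector `1_e ∈ F_2^d` of a set of coordinates. -/
def indic {d : ℕ} (e : Finset (Fin d)) : Vtx d := fun i => if i ∈ e then 1 else 0

/-- The family `D_{k,m}` of sets of `m` pairwise disjoint `k`-subsets of `[d]`. -/
def Dfam (d k m : ℕ) : Set (Finset (Finset (Fin d))) :=
  {D | D.card = m ∧ (∀ e ∈ D, e.card = k) ∧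
    ∀ e ∈ D, ∀ f ∈ D, e ≠ f → Disjoint e f}

/-- Vertex set of the cube `Q(D,v)`. -/
def QV {d : ℕ} (D : Finset (Finset (Fin d))) (v : Vtx d) : Set (Vtx d) :=
  {u | ∃ I : Finset (Finset (Fin d)), I ⊆ D ∧ u = v + ∑ e ∈ I, indic e}

/-- Adjacency in the cube `Q(D,v)`. -/
def QAdj {d : ℕ} (D : Finset (Finset (Fin d))) (v : Vtx d) (u w : Vtx d) : Prop :=
  u ∈ QV D v ∧ w ∈ QV D v ∧ ∃ e ∈ D, u + w = indic e

/-- The cube `Q(D,v)` as a simple graph on the ambient vertex set. -/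
def Qgraph {d : ℕ} (D : Finset (Finset (Fin d))) (v₀ : Vtx d) : SimpleGraph (Vtx d) where
  Adj u w := u ≠ w ∧ QAdj D v₀ u w
  symm := by
    constructor
    rintro u w ⟨hne, h1, h2, e, he, hs⟩
    exact ⟨hne.symm, h2, h1, e, he, by rwa [add_comm]⟩
  loopless := ⟨fun u h => h.1 rfl⟩

/-- Edge set of the cube `Q(D,v)` as a set of unordered pairs. -/
def Qedges {d : ℕ} (D : Finset (Finset (Fin d))) (v : Vtx d) : Set (Sym2 (Vtx d)) :=
  {e | ∃ u w : Vtx d, e = s(u, w) ∧ u ≠ w ∧ QAdj D v u w}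

/-- The family `Q_{k,m}` of cubes `Q(D,v)`, represented as (vertex set, edge set) pairs. -/
def CubeFam (d k m : ℕ) : Set (Set (Vtx d) × Set (Sym2 (Vtx d))) :=
  {H | ∃ D ∈ Dfam d k m, ∃ v : Vtx d, H.1 = QV D v ∧ H.2 = Qedges D v}

/-- The auxiliary graph `G_□` on `Q_{k,m}`. -/
def Gsquare (d k m : ℕ) : SimpleGraph (CubeFam d k m) where
  Adj H H' := H ≠ H' ∧ (H.1.1 ∩ H'.1.1).ncard = 2 ^ (m - 1)
  symm := by
    constructor
    rintro H H' ⟨hne, h⟩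
    exact ⟨hne.symm, by rwa [Set.inter_comm]⟩
  loopless := ⟨fun H h => h.1 rfl⟩

/-- The natural embedding of `Q^m` onto the cube `Q(D,v₀)` with directions `E 0, …, E (m-1)`. -/
def cubeEmb {d : ℕ} (m : ℕ) (E : Fin m → Finset (Fin d)) (v₀ : Vtx d) (y : Vtx m) : Vtx d :=
  v₀ + ∑ i, y i • indic (E i)

instance setPairMS (X Y : Type*) : MeasurableSpace (Set X × Set Y) := ⊤

/-- The (vertex set, edge set) pair of the graph `H_p[P_k]` transported to `Q^m`. -/
def polyMap {d : ℕ} (m k : ℕ) (E : Fin m → Finset (Fin d)) (v₀ : Vtx d)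
    (ω : Vtx d → Bool) : Set (Vtx m) × Set (Sym2 (Vtx m)) :=
  ({y | ω (cubeEmb m E v₀ y) = true},
   {e | ∃ y z : Vtx m, e = s(y, z) ∧ (cubeGraph m).Adj y z ∧
      IsPolytopeEdge (retained ω) (cubeEmb m E v₀ y) (cubeEmb m E v₀ z) ∧
      hammingDist (cubeEmb m E v₀ y) (cubeEmb m E v₀ z) = k})

/-- The (vertex set, edge set) pair of the mixed percolation `Q^m_{p,q}`. -/
def mixMap (m : ℕ) (ω : (Vtx m → Bool) × (Sym2 (Vtx m) → Bool)) :
    Set (Vtx m) × Set (Sym2 (Vtx m)) :=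
  ({y | ω.1 y = true}, (mixedGraph m ω.1 ω.2).edgeSet)

/-- The smallest subcube `Q^d[x,y]` of `Q^d` containing `x` and `y`. -/
def subcube {d : ℕ} (x y : Vtx d) : Set (Vtx d) := {z | ∀ i, x i = y i → z i = x i}

/-- `U` has the `α`-star property: pairwise vertex-disjoint stars centred at the
elements of `U`, each with at least `(1 - α/2)d` leaves. -/
def HasStarProperty {d : ℕ} (α : ℝ) (U : Set (Vtx d)) : Prop :=
  ∃ L : Vtx d → Set (Vtx d),
    (∀ u ∈ U, (∀ w ∈ L u, (cubeGraph d).Adj u w) ∧ ((1 - α / 2) * d ≤ ((L u).ncard : ℝ))) ∧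
    (∀ u ∈ U, ∀ u' ∈ U, u ≠ u' → Disjoint (insert u (L u)) (insert u' (L u')))

end


section AuxL
open Finset
variable {d : ℕ}

lemma indic_eq_iff {A B : Finset (Fin d)} : indic A = indic B ↔ A = B := by
  constructor
  · intro h; ext i
    have h2 := congrFun h i
    by_cases hA : i ∈ A <;> by_cases hB : i ∈ B <;>
      simp [indic, hA, hB] at h2 ⊢
  · rintro rfl; rfl

lemma indic_add (A B : Finset (Fin d)) : indic A + indic B = indic (symmDiff A B) := by
  funext i
  simp only [indic, Pi.add_apply, Finset.mem_symmDiff]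
  by_cases hA : i ∈ A <;> by_cases hB : i ∈ B <;> simp [hA, hB] <;> decide

lemma indic_empty : indic (∅ : Finset (Fin d)) = 0 := by
  funext i; simp [indic]

lemma sum_indic {I : Finset (Finset (Fin d))}
    (h : ∀ e ∈ I, ∀ f ∈ I, e ≠ f → Disjoint e f) :
    ∑ e ∈ I, indic e = indic (I.biUnion id) := by
  induction I using Finset.induction_on with
  | empty => simp [indic_empty]
  | @insert a I ha ih =>
    rw [Finset.sum_insert ha, ih (fun e he f hf => h e (mem_insert_of_mem he) f (mem_insert_of_mem hf)),
      indic_add, Finset.biUnion_insert]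
    have hd : Disjoint a (I.biUnion id) := by
      rw [Finset.disjoint_biUnion_right]
      intro f hf
      exact h a (mem_insert_self _ _) f (mem_insert_of_mem hf) (fun he => ha (he ▸ hf))
    rw [hd.symmDiff_eq_sup]
    rfl

lemma mem_QV_iff {D : Finset (Finset (Fin d))}
    (hdisj : ∀ e ∈ D, ∀ f ∈ D, e ≠ f → Disjoint e f) {v u : Vtx d} :
    u ∈ QV D v ↔ ∃ I, I ⊆ D ∧ u = v + indic (I.biUnion id) := by
  constructor <;> rintro ⟨I, hI, rfl⟩ <;>
    exact ⟨I, hI, by rw [sum_indic (fun e he f hf => hdisj e (hI he) f (hI hf))]⟩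

lemma blocks_eq {D I J : Finset (Finset (Fin d))}
    (hdisj : ∀ e ∈ D, ∀ f ∈ D, e ≠ f → Disjoint e f)
    (hne : ∀ e ∈ D, e.Nonempty) (hI : I ⊆ D) (hJ : J ⊆ D)
    (h : I.biUnion id = J.biUnion id) : I = J := by
  have aux : ∀ {I' J' : Finset (Finset (Fin d))}, I' ⊆ D → J' ⊆ D →
      I'.biUnion id = J'.biUnion id → ∀ e ∈ I', e ∈ J' := by
    intro I' J' hI' hJ' h' e he
    obtain ⟨i, hi⟩ := hne e (hI' he)
    have : i ∈ J'.biUnion id := by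
      rw [← h']; exact Finset.mem_biUnion.mpr ⟨e, he, hi⟩
    obtain ⟨f, hf, hif⟩ := Finset.mem_biUnion.mp this
    rcases eq_or_ne e f with rfl | hef
    · exact hf
    · exact absurd (hdisj e (hI' he) f (hJ' hf) hef) (by
        rw [Finset.disjoint_left]; intro hcon; exact hcon hi hif)
  ext e
  exact ⟨fun he => aux hI hJ h e he, fun he => aux hJ hI h.symm e he⟩

lemma QV_ncard {k n : ℕ} {D : Finset (Finset (Fin d))} (hD : D ∈ Dfam d k n)
    (hk : 1 ≤ k) (v : Vtx d) : (QV D v).ncard = 2 ^ n := by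
  obtain ⟨hcard, hcards, hdisj⟩ := hD
  have hne : ∀ e ∈ D, e.Nonempty := fun e he =>
    Finset.card_pos.mp (by rw [hcards e he]; omega)
  have himg : QV D v
      = (fun I : Finset (Finset (Fin d)) => v + indic (I.biUnion id)) '' ↑D.powerset := by
    ext u
    rw [mem_QV_iff hdisj]
    simp only [Set.mem_image, Finset.coe_powerset, Set.mem_setOf_eq, Set.mem_preimage,
      Finset.mem_coe, Finset.mem_powerset]
    constructor
    · rintro ⟨I, hI, rfl⟩; exact ⟨I, hI, rfl⟩
    · rintro ⟨I, hI, rfl⟩; exact ⟨I, hI, rfl⟩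
  rw [himg, Set.ncard_image_of_injOn, Set.ncard_coe_finset, Finset.card_powerset, hcard]
  intro I hI J hJ hIJ
  simp only [Finset.coe_powerset, Set.mem_preimage, Finset.mem_coe, Finset.mem_powerset] at hI hJ
  have := add_left_cancel hIJ
  exact blocks_eq hdisj hne hI hJ (indic_eq_iff.mp this)
end AuxL

section AuxM
open Finset
variable {d k m : ℕ}

lemma Dfam_mem_nonempty {D : Finset (Finset (Fin d))} (hD : D ∈ Dfam d k m) (hk : 1 ≤ k) :
    ∀ e ∈ D, e.Nonempty := fun e he => Finset.card_pos.mp (by rw [hD.2.1 e he]; omega)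

lemma Dfam_erase {D : Finset (Finset (Fin d))} (hD : D ∈ Dfam d k m) {e : Finset (Fin d)}
    (he : e ∈ D) : D.erase e ∈ Dfam d k (m-1) :=
  ⟨by rw [card_erase_of_mem he, hD.1], fun f hf => hD.2.1 f (mem_of_mem_erase hf),
   fun f hf g hg => hD.2.2 f (mem_of_mem_erase hf) g (mem_of_mem_erase hg)⟩

lemma not_mem_of_disjoint {e' : Finset (Fin d)} {X : Finset (Finset (Fin d))}
    (h : ∀ f ∈ X, Disjoint e' f) (hne : e'.Nonempty) : e' ∉ X := by
  intro hmem
  exact hne.ne_empty (disjoint_self.mp (h e' hmem))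

lemma Dfam_insert {D : Finset (Finset (Fin d))} (hD : D ∈ Dfam d k m) {e e' : Finset (Fin d)}
    (he : e ∈ D) (he'k : e'.card = k) (hk : 1 ≤ k)
    (hd' : ∀ f ∈ D.erase e, Disjoint e' f) :
    insert e' (D.erase e) ∈ Dfam d k m := by
  have hne' : e'.Nonempty := card_pos.mp (by omega)
  have hnm : e' ∉ D.erase e := not_mem_of_disjoint hd' hne'
  have hm : 1 ≤ m := hD.1 ▸ Finset.card_pos.mpr ⟨e, he⟩
  refine ⟨?_, ?_, ?_⟩
  · rw [card_insert_of_notMem hnm, card_erase_of_mem he, hD.1]; omega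
  · intro f hf
    rcases mem_insert.mp hf with rfl | hf'
    · exact he'k
    · exact hD.2.1 f (mem_of_mem_erase hf')
  · intro f hf g hg hfg
    rcases mem_insert.mp hf with rfl | hf'
    · rcases mem_insert.mp hg with rfl | hg'
      · exact absurd rfl hfg
      · exact hd' g hg'
    · rcases mem_insert.mp hg with rfl | hg'
      · exact (hd' f hf').symm
      · exact hD.2.2 f (mem_of_mem_erase hf') g (mem_of_mem_erase hg') hfg

lemma QV_inter_zero {D : Finset (Finset (Fin d))} (hD : D ∈ Dfam d k m)
    {e e' : Finset (Fin d)} (he : e ∈ D) (he'k : e'.card = k) (hk : 1 ≤ k)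
    (hd' : ∀ f ∈ D.erase e, Disjoint e' f) (hne : e' ≠ e) (v : Vtx d) :
    QV D v ∩ QV (insert e' (D.erase e)) v = QV (D.erase e) v := by
  have hD' := Dfam_insert hD he he'k hk hd'
  apply Set.Subset.antisymm
  · rintro u ⟨hu1, hu2⟩
    rw [mem_QV_iff hD.2.2] at hu1
    rw [mem_QV_iff hD'.2.2] at hu2
    obtain ⟨I, hI, rfl⟩ := hu1
    obtain ⟨J, hJ, hJeq⟩ := hu2
    have hsum : I.biUnion id = J.biUnion id := indic_eq_iff.mp (add_left_cancel hJeq)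
    have heI : e ∉ I := by
      intro heI
      have hns : ¬ e ⊆ e' := fun hsub => hne
        (Finset.eq_of_subset_of_card_le hsub (le_of_eq (by rw [he'k, hD.2.1 e he]))).symm
      obtain ⟨i, hie, hie'⟩ := Finset.not_subset.mp hns
      have hiI : i ∈ I.biUnion id := mem_biUnion.mpr ⟨e, heI, hie⟩
      rw [hsum] at hiI
      obtain ⟨f, hfJ, hif⟩ := mem_biUnion.mp hiI
      rcases mem_insert.mp (hJ hfJ) with rfl | hf
      · exact hie' hif
      · exact Finset.disjoint_left.mp
          (hD.2.2 e he f (mem_of_mem_erase hf) (ne_of_mem_erase hf).symm) hie hif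
    exact (mem_QV_iff (Dfam_erase hD he).2.2).mpr
      ⟨I, fun x hx => mem_erase.mpr ⟨fun hxe => heI (hxe ▸ hx), hI hx⟩, rfl⟩
  · intro u hu
    obtain ⟨I, hI, rfl⟩ := hu
    exact ⟨⟨I, hI.trans (erase_subset e D), rfl⟩, ⟨I, hI.trans (subset_insert _ _), rfl⟩⟩

lemma QV_inter_one {D : Finset (Finset (Fin d))} (hD : D ∈ Dfam d k m)
    {e e' : Finset (Fin d)} (he : e ∈ D) (he'k : e'.card = k) (hk : 1 ≤ k)
    (hd' : ∀ f ∈ D.erase e, Disjoint e' f) (hne : e' ≠ e) (v : Vtx d) :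
    QV D v ∩ QV (insert e' (D.erase e)) (v + indic e) = QV (D.erase e) (v + indic e) := by
  have hD' := Dfam_insert hD he he'k hk hd'
  have hknon : ∀ f ∈ D, f.Nonempty := Dfam_mem_nonempty hD hk
  apply Set.Subset.antisymm
  · rintro u ⟨hu1, hu2⟩
    rw [mem_QV_iff hD.2.2] at hu1
    rw [mem_QV_iff hD'.2.2] at hu2
    obtain ⟨I, hI, rfl⟩ := hu1
    obtain ⟨J, hJ, hJeq⟩ := hu2
    rw [add_assoc] at hJeq
    have hsum : I.biUnion id = symmDiff e (J.biUnion id) := by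
      have := add_left_cancel hJeq
      rw [indic_add] at this
      exact indic_eq_iff.mp this
    have heJ' : e' ∉ J := by
      intro heJ
      have hns : ¬ e' ⊆ e := fun hsub => hne
        (Finset.eq_of_subset_of_card_le hsub (le_of_eq (by rw [he'k, hD.2.1 e he])))
      obtain ⟨i, hie', hie⟩ := Finset.not_subset.mp hns
      have hiJ : i ∈ J.biUnion id := mem_biUnion.mpr ⟨e', heJ, hie'⟩
      have hiI : i ∈ I.biUnion id := by
        rw [hsum, Finset.mem_symmDiff]; exact Or.inr ⟨hiJ, hie⟩
      obtain ⟨f, hfI, hif⟩ := mem_biUnion.mp hiI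
      rcases eq_or_ne f e with rfl | hfe
      · exact hie hif
      · exact Finset.disjoint_left.mp
          (hd' f (mem_erase.mpr ⟨hfe, hI hfI⟩)) hie' hif
    have hJsub : J ⊆ D.erase e := fun x hx => by
      rcases mem_insert.mp (hJ hx) with rfl | hx'
      · exact absurd hx heJ'
      · exact hx'
    have hdisjeJ : Disjoint e (J.biUnion id) := by
      rw [Finset.disjoint_biUnion_right]
      intro f hf
      exact hD.2.2 e he f (mem_of_mem_erase (hJsub hf)) (ne_of_mem_erase (hJsub hf)).symm
    have heI : e ∈ I := by
      obtain ⟨i, hie⟩ := hknon e he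
      have hiI : i ∈ I.biUnion id := by
        rw [hsum, Finset.mem_symmDiff]
        exact Or.inl ⟨hie, Finset.disjoint_left.mp hdisjeJ hie⟩
      obtain ⟨f, hfI, hif⟩ := mem_biUnion.mp hiI
      rcases eq_or_ne f e with rfl | hfe
      · exact hfI
      · exact absurd hie (Finset.disjoint_left.mp (hD.2.2 f (hI hfI) e he hfe) hif)
    -- rewrite u = (v + indic e) + indic ((I.erase e).biUnion id)
    have hdisjeI : Disjoint e ((I.erase e).biUnion id) := by
      rw [Finset.disjoint_biUnion_right]
      intro f hf
      exact hD.2.2 e he f (hI (mem_of_mem_erase hf)) (ne_of_mem_erase hf).symm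
    have h1 : I.biUnion id = e ∪ (I.erase e).biUnion id := by
      conv_lhs => rw [← insert_erase heI]
      rw [Finset.biUnion_insert]
      rfl
    have key : indic e + indic ((I.erase e).biUnion id) = indic (e ∪ (I.erase e).biUnion id) := by
      rw [indic_add, hdisjeI.symmDiff_eq_sup, Finset.sup_eq_union]
    refine (mem_QV_iff (Dfam_erase hD he).2.2).mpr
      ⟨I.erase e, fun x hx => mem_erase.mpr ⟨ne_of_mem_erase hx, hI (mem_of_mem_erase hx)⟩, ?_⟩
    rw [h1, ← key, add_assoc]
  · intro u hu
    rw [mem_QV_iff (Dfam_erase hD he).2.2] at hu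
    obtain ⟨I, hI, rfl⟩ := hu
    have hdisjeI : Disjoint e (I.biUnion id) := by
      rw [Finset.disjoint_biUnion_right]
      intro f hf
      exact hD.2.2 e he f (mem_of_mem_erase (hI hf)) (ne_of_mem_erase (hI hf)).symm
    have heInotmem : e ∉ I := by
      intro hmem
      obtain ⟨i, hie⟩ := hknon e he
      exact Finset.disjoint_left.mp hdisjeI hie (mem_biUnion.mpr ⟨e, hmem, hie⟩)
    constructor
    · refine (mem_QV_iff hD.2.2).mpr ⟨insert e I, ?_, ?_⟩
      · intro x hx
        rcases mem_insert.mp hx with rfl | hx'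
        · exact he
        · exact mem_of_mem_erase (hI hx')
      · have key : indic e + indic (I.biUnion id) = indic (e ∪ I.biUnion id) := by
          rw [indic_add, hdisjeI.symmDiff_eq_sup, Finset.sup_eq_union]
        have h1 : (insert e I).biUnion id = e ∪ I.biUnion id := by
          rw [Finset.biUnion_insert]; rfl
        rw [h1, ← key, add_assoc]
    · exact (mem_QV_iff hD'.2.2).mpr ⟨I, hI.trans (subset_insert _ _), rfl⟩

end AuxM

section AuxN
open Finset
variable {d k m : ℕ}

lemma QV_ne_zero {D : Finset (Finset (Fin d))} (hD : D ∈ Dfam d k m)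
    {e e' : Finset (Fin d)} (he : e ∈ D) (he'k : e'.card = k) (hk : 1 ≤ k)
    (hd' : ∀ f ∈ D.erase e, Disjoint e' f) (hne : e' ≠ e) (v : Vtx d) :
    QV D v ≠ QV (insert e' (D.erase e)) v := by
  have hD' := Dfam_insert hD he he'k hk hd'
  have hne' : e'.Nonempty := card_pos.mp (by omega)
  intro h
  have hmem : v + indic e' ∈ QV (insert e' (D.erase e)) v :=
    (mem_QV_iff hD'.2.2).mpr ⟨{e'}, singleton_subset_iff.mpr (mem_insert_self _ _),
      by rw [Finset.singleton_biUnion]; rfl⟩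
  rw [← h] at hmem
  obtain ⟨I, hI, heq⟩ := (mem_QV_iff hD.2.2).mp hmem
  have he'I : e' = I.biUnion id := indic_eq_iff.mp (add_left_cancel heq)
  obtain ⟨i, hi⟩ := hne'
  obtain ⟨f, hfI, hif⟩ := mem_biUnion.mp (he'I ▸ hi)
  have hfe' : f = e' := by
    refine Finset.eq_of_subset_of_card_le (fun x hx => ?_)
      (le_of_eq (by rw [he'k, hD.2.1 f (hI hfI)]))
    rw [he'I]; exact mem_biUnion.mpr ⟨f, hfI, hx⟩
  subst hfe'
  have : f ∈ D.erase e := mem_erase.mpr ⟨hne, hI hfI⟩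
  exact (card_pos.mp (by rw [hD.2.1 f (hI hfI)]; omega)).ne_empty
    (disjoint_self.mp (hd' f this))

lemma QV_ne_one {D : Finset (Finset (Fin d))} (hD : D ∈ Dfam d k m)
    {e e' : Finset (Fin d)} (he : e ∈ D) (he'k : e'.card = k) (hk : 1 ≤ k)
    (hd' : ∀ f ∈ D.erase e, Disjoint e' f) (hne : e' ≠ e) (v : Vtx d) :
    QV D v ≠ QV (insert e' (D.erase e)) (v + indic e) := by
  have hD' := Dfam_insert hD he he'k hk hd'
  intro h
  have hmem : v ∈ QV D v := (mem_QV_iff hD.2.2).mpr ⟨∅, empty_subset _,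
    by rw [Finset.biUnion_empty, indic_empty, add_zero]⟩
  rw [h] at hmem
  obtain ⟨J, hJ, heq⟩ := (mem_QV_iff hD'.2.2).mp hmem
  rw [add_assoc] at heq
  have h0 : (0 : Vtx d) = indic e + indic (J.biUnion id) := add_left_cancel (by rw [add_zero]; exact heq)
  rw [indic_add] at h0
  have hsd : symmDiff e (J.biUnion id) = ∅ := (indic_eq_iff.mp (indic_empty ▸ h0.symm))
  have heJ : e = J.biUnion id := symmDiff_eq_bot.mp hsd
  obtain ⟨i, hi⟩ := Dfam_mem_nonempty hD hk e he
  obtain ⟨f, hfJ, hif⟩ := mem_biUnion.mp (heJ ▸ hi)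
  have hfsub : f ⊆ e := fun x hx => heJ ▸ mem_biUnion.mpr ⟨f, hfJ, hx⟩
  have hfk : f.card = k := hD'.2.1 f (hJ hfJ)
  have hfe : f = e := Finset.eq_of_subset_of_card_le hfsub
    (le_of_eq (by rw [hfk, hD.2.1 e he]))
  subst hfe
  rcases mem_insert.mp (hJ hfJ) with rfl | hf'
  · exact hne rfl
  · exact (ne_of_mem_erase hf') rfl

def cubeVtx {D : Finset (Finset (Fin d))} (hD : D ∈ Dfam d k m) (v : Vtx d) :
    ↥(CubeFam d k m) := ⟨(QV D v, Qedges D v), ⟨D, hD, v, rfl, rfl⟩⟩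

lemma cubeVtx_fst {D : Finset (Finset (Fin d))} (hD : D ∈ Dfam d k m) (v : Vtx d) :
    (cubeVtx hD v).1.1 = QV D v := rfl

lemma cubeVtx_congr {D D' : Finset (Finset (Fin d))} (hD : D ∈ Dfam d k m)
    (hD' : D' ∈ Dfam d k m) {v v' : Vtx d} (h1 : D = D') (h2 : v = v') :
    cubeVtx hD v = cubeVtx hD' v' := by subst h1; subst h2; rfl

lemma swap_adj {D : Finset (Finset (Fin d))} (hD : D ∈ Dfam d k m)
    {e e' : Finset (Fin d)} (he : e ∈ D) (he'k : e'.card = k) (hk : 1 ≤ k)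
    (hd' : ∀ f ∈ D.erase e, Disjoint e' f) (hne : e' ≠ e) (v w : Vtx d)
    (hw : w = v ∨ w = v + indic e) :
    (Gsquare d k m).Adj (cubeVtx hD v) (cubeVtx (Dfam_insert hD he he'k hk hd') w) := by
  refine ⟨?_, ?_⟩
  · intro hcon
    have h1 : QV D v = QV (insert e' (D.erase e)) w :=
      congrArg (fun H => H.1.1) hcon
    rcases hw with rfl | rfl
    · exact QV_ne_zero hD he he'k hk hd' hne _ h1
    · exact QV_ne_one hD he he'k hk hd' hne _ h1
  · show (QV D v ∩ QV (insert e' (D.erase e)) w).ncard = 2 ^ (m - 1)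
    rcases hw with rfl | rfl
    · rw [QV_inter_zero hD he he'k hk hd' hne]
      exact QV_ncard (Dfam_erase hD he) hk _
    · rw [QV_inter_one hD he he'k hk hd' hne]
      exact QV_ncard (Dfam_erase hD he) hk _

def ReachLe (d k m n : ℕ) (H H' : ↥(CubeFam d k m)) : Prop :=
  ∃ p : (Gsquare d k m).Walk H H', p.length ≤ n

lemma ReachLe.refl (n : ℕ) (H : ↥(CubeFam d k m)) : ReachLe d k m n H H :=
  ⟨SimpleGraph.Walk.nil, by simp⟩

lemma ReachLe.mono {n n' : ℕ} (h : n ≤ n') {H H' : ↥(CubeFam d k m)}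
    (hr : ReachLe d k m n H H') : ReachLe d k m n' H H' :=
  ⟨hr.choose, hr.choose_spec.trans h⟩

lemma ReachLe.trans {a b : ℕ} {H H' H'' : ↥(CubeFam d k m)}
    (h1 : ReachLe d k m a H H') (h2 : ReachLe d k m b H' H'') :
    ReachLe d k m (a + b) H H'' := by
  obtain ⟨p, hp⟩ := h1
  obtain ⟨q, hq⟩ := h2
  exact ⟨p.append q, by rw [SimpleGraph.Walk.length_append]; omega⟩

lemma ReachLe.symm {a : ℕ} {H H' : ↥(CubeFam d k m)}
    (h : ReachLe d k m a H H') : ReachLe d k m a H' H := by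
  obtain ⟨p, hp⟩ := h
  exact ⟨p.reverse, by rwa [SimpleGraph.Walk.length_reverse]⟩

lemma ReachLe.cons {a : ℕ} {H H' H'' : ↥(CubeFam d k m)}
    (h : (Gsquare d k m).Adj H H') (hr : ReachLe d k m a H' H'') :
    ReachLe d k m (a + 1) H H'' := by
  obtain ⟨p, hp⟩ := hr
  exact ⟨SimpleGraph.Walk.cons h p, by simp; omega⟩

lemma ReachLe.congr {n : ℕ} {H H' H'' : ↥(CubeFam d k m)}
    (h : ReachLe d k m n H H') (he : H' = H'') : ReachLe d k m n H H'' := he ▸ h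

lemma ReachLe.of_adj {H H' : ↥(CubeFam d k m)} (h : (Gsquare d k m).Adj H H') :
    ReachLe d k m 1 H H' := ReachLe.cons h (ReachLe.refl 0 H')

end AuxN

section AuxO
open Finset
variable {d k m : ℕ}

lemma exists_fresh_set (S : Finset (Fin d)) (t : ℕ) (h : S.card + t ≤ d) :
    ∃ T : Finset (Fin d), T.card = t ∧ Disjoint T S := by
  have hc : t ≤ Sᶜ.card := by
    rw [Finset.card_compl]
    simp only [Fintype.card_fin]
    omega
  obtain ⟨T, hTs, hTc⟩ := Finset.exists_subset_card_eq hc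
  refine ⟨T, hTc, Finset.disjoint_left.mpr fun x hx hxS => ?_⟩
  exact (Finset.mem_compl.mp (hTs hx)) hxS

lemma exists_fresh_family (S : Finset (Fin d)) (hk : 1 ≤ k) (n : ℕ)
    (h : S.card + k * n ≤ d) :
    ∃ G : Finset (Finset (Fin d)), G ∈ Dfam d k n ∧ ∀ e ∈ G, Disjoint e S := by
  induction n with
  | zero => exact ⟨∅, ⟨rfl, by simp, by simp⟩, by simp⟩
  | succ n ih =>
    have hkn : k * n ≤ k * (n + 1) := Nat.mul_le_mul_left k (by omega)
    obtain ⟨G, hG, hGS⟩ := ih (by omega)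
    have hUcard : (G.biUnion id).card ≤ k * n := by
      calc (G.biUnion id).card ≤ ∑ f ∈ G, (id f).card := Finset.card_biUnion_le
        _ = ∑ f ∈ G, k := Finset.sum_congr rfl (fun f hf => hG.2.1 f hf)
        _ = n * k := by rw [Finset.sum_const, hG.1, smul_eq_mul]
        _ = k * n := Nat.mul_comm n k
    obtain ⟨e, hek, hedisj⟩ := exists_fresh_set (S ∪ G.biUnion id) k (by
      have h2 := Finset.card_union_le S (G.biUnion id)
      have h3 : k * (n + 1) = k * n + k := by ring
      omega)
    have heS : Disjoint e S := hedisj.mono_right Finset.subset_union_left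
    have heG : ∀ f ∈ G, Disjoint e f := fun f hf =>
      hedisj.mono_right ((Finset.subset_biUnion_of_mem id hf).trans Finset.subset_union_right)
    have hene : e.Nonempty := card_pos.mp (by omega)
    have henG : e ∉ G := not_mem_of_disjoint heG hene
    refine ⟨insert e G, ⟨?_, ?_, ?_⟩, ?_⟩
    · rw [card_insert_of_notMem henG, hG.1]
    · intro f hf
      rcases mem_insert.mp hf with rfl | hf'
      · exact hek
      · exact hG.2.1 f hf'
    · intro f hf g hg hfg
      rcases mem_insert.mp hf with rfl | hf'
      · rcases mem_insert.mp hg with rfl | hg'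
        · exact absurd rfl hfg
        · exact heG g hg'
      · rcases mem_insert.mp hg with rfl | hg'
        · exact (heG f hf').symm
        · exact hG.2.2 f hf' g hg' hfg
    · intro f hf
      rcases mem_insert.mp hf with rfl | hf'
      · exact heS
      · exact hGS f hf'

lemma reach_family_aux (hk : 1 ≤ k) {D F : Finset (Finset (Fin d))}
    (hF : F ∈ Dfam d k m)
    (hDF : ∀ e ∈ D, ∀ f ∈ F, Disjoint e f) (v : Vtx d) :
    ∀ n : ℕ, ∀ (C : Finset (Finset (Fin d))) (hC : C ∈ Dfam d k m),
      C ⊆ D ∪ F → (C \ F).card ≤ n → ReachLe d k m n (cubeVtx hC v) (cubeVtx hF v) := by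
  intro n
  induction n with
  | zero =>
    intro C hC hsub hcard
    have h0 : C \ F = ∅ := card_eq_zero.mp (le_antisymm hcard (Nat.zero_le _))
    have hCF : C ⊆ F := by rwa [Finset.sdiff_eq_empty_iff_subset] at h0
    have hCFeq : C = F := Finset.eq_of_subset_of_card_le hCF (by rw [hC.1, hF.1])
    rw [cubeVtx_congr hC hF hCFeq rfl]
    exact ReachLe.refl 0 _
  | succ n ih =>
    intro C hC hsub hcard
    by_cases hCF : C = F
    · rw [cubeVtx_congr hC hF hCF rfl]; exact ReachLe.refl _ _
    have hCFne : (C \ F).Nonempty := by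
      rw [Finset.sdiff_nonempty]
      intro hsub'
      exact hCF (Finset.eq_of_subset_of_card_le hsub' (by rw [hC.1, hF.1]))
    obtain ⟨e, heCF⟩ := hCFne
    have heC : e ∈ C := (mem_sdiff.mp heCF).1
    have heF : e ∉ F := (mem_sdiff.mp heCF).2
    have hFCne : (F \ C).Nonempty := by
      rw [Finset.sdiff_nonempty]
      intro hsub'
      exact hCF (Finset.eq_of_subset_of_card_le hsub' (by rw [hC.1, hF.1])).symm
    obtain ⟨f, hfFC⟩ := hFCne
    have hfF : f ∈ F := (mem_sdiff.mp hfFC).1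
    have hfC : f ∉ C := (mem_sdiff.mp hfFC).2
    have hd' : ∀ g ∈ C.erase e, Disjoint f g := by
      intro g hg
      rcases mem_union.mp (hsub (mem_of_mem_erase hg)) with hgD | hgF
      · exact (hDF g hgD f hfF).symm
      · exact hF.2.2 f hfF g hgF (fun h => hfC (h ▸ mem_of_mem_erase hg))
    have hne : f ≠ e := fun h => hfC (h ▸ heC)
    have hadj := swap_adj hC heC (hF.2.1 f hfF) hk hd' hne v v (Or.inl rfl)
    have hC1 : insert f (C.erase e) ∈ Dfam d k m :=
      Dfam_insert hC heC (hF.2.1 f hfF) hk hd'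
    have hsub1 : insert f (C.erase e) ⊆ D ∪ F := by
      intro x hx
      rcases mem_insert.mp hx with rfl | hx'
      · exact mem_union_right _ hfF
      · exact hsub (mem_of_mem_erase hx')
    have hcard1 : ((insert f (C.erase e)) \ F).card ≤ n := by
      have h1 : (insert f (C.erase e)) \ F = (C \ F).erase e := by
        ext x
        simp only [mem_sdiff, mem_insert, mem_erase]
        constructor
        · rintro ⟨rfl | ⟨hxe, hxC⟩, hxF⟩
          · exact absurd hfF hxF
          · exact ⟨hxe, hxC, hxF⟩
        · rintro ⟨hxe, hxC, hxF⟩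
          exact ⟨Or.inr ⟨hxe, hxC⟩, hxF⟩
      rw [h1, card_erase_of_mem heCF]
      omega
    exact ReachLe.cons hadj (ih _ hC1 hsub1 hcard1)

lemma reach_family {D F : Finset (Finset (Fin d))} (hD : D ∈ Dfam d k m)
    (hF : F ∈ Dfam d k m) (hk : 1 ≤ k)
    (hDF : ∀ e ∈ D, ∀ f ∈ F, Disjoint e f) (v : Vtx d) :
    ReachLe d k m m (cubeVtx hD v) (cubeVtx hF v) :=
  reach_family_aux hk hF hDF v m D hD Finset.subset_union_left
    (le_trans (card_le_card Finset.sdiff_subset) (le_of_eq hD.1))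

end AuxO

section AuxP
open Finset
variable {d k m : ℕ}

lemma Dfam_biUnion_card {n : ℕ} {G : Finset (Finset (Fin d))} (hG : G ∈ Dfam d k n) :
    (G.biUnion id).card ≤ k * n := by
  calc (G.biUnion id).card ≤ ∑ f ∈ G, (id f).card := Finset.card_biUnion_le
    _ = ∑ f ∈ G, k := Finset.sum_congr rfl (fun f hf => hG.2.1 f hf)
    _ = n * k := by rw [Finset.sum_const, hG.1, smul_eq_mul]
    _ = k * n := Nat.mul_comm n k

lemma reach_flip_core {F : Finset (Finset (Fin d))} (hF : F ∈ Dfam d k m)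
    (hm : 1 ≤ m) (hk : 3 ≤ k) (hkodd : Odd k)
    (hroom : k * m + 2 * k + 1 ≤ d) (i : Fin d) (hi : ∀ f ∈ F, i ∉ f) (v : Vtx d) :
    ReachLe d k m 3 (cubeVtx hF v) (cubeVtx hF (v + indic {i})) := by
  obtain ⟨j, hj⟩ := hkodd
  have hk1 : 1 ≤ k := by omega
  have hFne : F.Nonempty := card_pos.mp (by rw [hF.1]; omega)
  obtain ⟨s₁, hs₁⟩ := hFne
  have hs₁k : s₁.card = k := hF.2.1 s₁ hs₁
  have hUcard := Dfam_biUnion_card hF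
  have hs₁U : s₁ ⊆ F.biUnion id := Finset.subset_biUnion_of_mem id hs₁
  obtain ⟨A, hAs, hAcard⟩ := Finset.exists_subset_card_eq
    (show (k-1)/2 ≤ s₁.card by rw [hs₁k]; omega)
  obtain ⟨B, hBcard, hBd⟩ := exists_fresh_set (insert i (F.biUnion id)) ((k-1)/2) (by
    have := Finset.card_insert_le i (F.biUnion id)
    omega)
  have hBU : ∀ x ∈ B, x ∉ F.biUnion id := fun x hx hxU =>
    Finset.disjoint_left.mp hBd hx (mem_insert_of_mem hxU)
  have hiB : i ∉ B := fun hx => Finset.disjoint_left.mp hBd hx (mem_insert_self _ _)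
  have his₁ : i ∉ s₁ := hi s₁ hs₁
  have hiA : i ∉ A := fun hx => his₁ (hAs hx)
  have hAB : Disjoint A B := Finset.disjoint_left.mpr fun x hx hxB =>
    hBU x hxB (hs₁U (hAs hx))
  have hCcard : (A ∪ B).card = k - 1 := by
    rw [Finset.card_union_of_disjoint hAB, hAcard, hBcard]; omega
  have hiC : i ∉ A ∪ B := by
    rw [Finset.mem_union]; rintro (h | h); exacts [hiA h, hiB h]
  have hs₂card : (insert i (A ∪ B)).card = k := by
    rw [card_insert_of_notMem hiC, hCcard]; omega
  have hs₃card : ((s₁ \ A) ∪ B).card = k := by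
    rw [Finset.card_union_of_disjoint (Finset.disjoint_left.mpr fun x hx hxB =>
      hBU x hxB (hs₁U (mem_sdiff.mp hx).1)), Finset.card_sdiff_of_subset hAs, hs₁k, hAcard, hBcard]
    omega
  -- step 1 : s₁ → s₂
  have hd1 : ∀ f ∈ F.erase s₁, Disjoint (insert i (A ∪ B)) f := by
    intro f hf
    rw [Finset.disjoint_left]
    intro x hx hxf
    rcases mem_insert.mp hx with rfl | hx'
    · exact hi f (mem_of_mem_erase hf) hxf
    · rcases mem_union.mp hx' with hxA | hxB
      · exact Finset.disjoint_left.mp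
          (hF.2.2 s₁ hs₁ f (mem_of_mem_erase hf) (ne_of_mem_erase hf).symm) (hAs hxA) hxf
      · exact hBU x hxB (mem_biUnion.mpr ⟨f, mem_of_mem_erase hf, hxf⟩)
  have hne1 : insert i (A ∪ B) ≠ s₁ := fun h => his₁ (h ▸ mem_insert_self i (A ∪ B))
  have adj1 := swap_adj hF hs₁ hs₂card hk1 hd1 hne1 v (v + indic s₁) (Or.inr rfl)
  have hF₁ : insert (insert i (A ∪ B)) (F.erase s₁) ∈ Dfam d k m :=
    Dfam_insert hF hs₁ hs₂card hk1 hd1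
  have hs₂ne : (insert i (A ∪ B)).Nonempty := ⟨i, mem_insert_self _ _⟩
  have hs₂notin : insert i (A ∪ B) ∉ F.erase s₁ := not_mem_of_disjoint hd1 hs₂ne
  have herase1 : (insert (insert i (A ∪ B)) (F.erase s₁)).erase (insert i (A ∪ B))
      = F.erase s₁ := Finset.erase_insert hs₂notin
  -- step 2 : s₂ → s₃
  have hd2 : ∀ f ∈ (insert (insert i (A ∪ B)) (F.erase s₁)).erase (insert i (A ∪ B)),
      Disjoint ((s₁ \ A) ∪ B) f := by
    rw [herase1]
    intro f hf
    rw [Finset.disjoint_left]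
    intro x hx hxf
    rcases mem_union.mp hx with hxs | hxB
    · exact Finset.disjoint_left.mp
        (hF.2.2 s₁ hs₁ f (mem_of_mem_erase hf) (ne_of_mem_erase hf).symm)
        (mem_sdiff.mp hxs).1 hxf
    · exact hBU x hxB (mem_biUnion.mpr ⟨f, mem_of_mem_erase hf, hxf⟩)
  have hiS3 : i ∉ (s₁ \ A) ∪ B := by
    rw [Finset.mem_union]
    rintro (h | h)
    · exact his₁ (mem_sdiff.mp h).1
    · exact hiB h
  have hne2 : (s₁ \ A) ∪ B ≠ insert i (A ∪ B) := fun h => hiS3 (h ▸ mem_insert_self i (A ∪ B))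
  have adj2 := swap_adj hF₁ (mem_insert_self _ _) hs₃card hk1 hd2 hne2
    (v + indic s₁) (v + indic s₁ + indic (insert i (A ∪ B))) (Or.inr rfl)
  have hF₂ : insert ((s₁ \ A) ∪ B)
      ((insert (insert i (A ∪ B)) (F.erase s₁)).erase (insert i (A ∪ B))) ∈ Dfam d k m :=
    Dfam_insert hF₁ (mem_insert_self _ _) hs₃card hk1 hd2
  -- step 3 : s₃ → s₁
  have hs₁A : ((k-1)/2 : ℕ) < k := by omega
  have hs₁mA : (s₁ \ A).Nonempty := by
    rw [← Finset.card_pos, Finset.card_sdiff_of_subset hAs, hs₁k, hAcard]; omega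
  have hs₃notin : (s₁ \ A) ∪ B ∉ F.erase s₁ := by
    intro hmem
    obtain ⟨x, hx⟩ := hs₁mA
    have hxs₁ : x ∈ s₁ := (mem_sdiff.mp hx).1
    have hxS3 : x ∈ (s₁ \ A) ∪ B := mem_union_left _ hx
    rcases eq_or_ne s₁ ((s₁ \ A) ∪ B) with heq | hne
    · rw [← heq] at hmem
      exact (Finset.notMem_erase s₁ F) hmem
    · exact Finset.disjoint_left.mp
        (hF.2.2 s₁ hs₁ _ (mem_of_mem_erase hmem) hne) hxs₁ hxS3
  have herase2 : (insert ((s₁ \ A) ∪ B)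
      ((insert (insert i (A ∪ B)) (F.erase s₁)).erase (insert i (A ∪ B)))).erase ((s₁ \ A) ∪ B)
      = F.erase s₁ := by
    rw [herase1, Finset.erase_insert (herase1 ▸ hs₃notin)]
  have hd3 : ∀ f ∈ (insert ((s₁ \ A) ∪ B)
      ((insert (insert i (A ∪ B)) (F.erase s₁)).erase (insert i (A ∪ B)))).erase ((s₁ \ A) ∪ B),
      Disjoint s₁ f := by
    rw [herase2]
    intro f hf
    exact hF.2.2 s₁ hs₁ f (mem_of_mem_erase hf) (ne_of_mem_erase hf).symm
  have hAne : A.Nonempty := by rw [← Finset.card_pos, hAcard]; omega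
  have hne3 : s₁ ≠ (s₁ \ A) ∪ B := by
    obtain ⟨a, ha⟩ := hAne
    intro h
    have has₁ : a ∈ s₁ := hAs ha
    have : a ∈ (s₁ \ A) ∪ B := h ▸ has₁
    rcases mem_union.mp this with h' | h'
    · exact (mem_sdiff.mp h').2 ha
    · exact hBU a h' (hs₁U has₁)
  have adj3 := swap_adj hF₂ (mem_insert_self _ _) hs₁k hk1 hd3 hne3
    (v + indic s₁ + indic (insert i (A ∪ B)))
    (v + indic s₁ + indic (insert i (A ∪ B)) + indic ((s₁ \ A) ∪ B)) (Or.inr rfl)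
  -- final identification
  have hF₃eq : insert s₁ ((insert ((s₁ \ A) ∪ B)
      ((insert (insert i (A ∪ B)) (F.erase s₁)).erase (insert i (A ∪ B)))).erase ((s₁ \ A) ∪ B))
      = F := by
    rw [herase2, Finset.insert_erase hs₁]
  have hkey : indic s₁ + indic (insert i (A ∪ B)) + indic ((s₁ \ A) ∪ B)
      = indic ({i} : Finset (Fin d)) := by
    funext x
    simp only [indic, Pi.add_apply]
    by_cases hxi : x = i
    · subst hxi
      simp only [mem_insert, mem_union, mem_sdiff, mem_singleton, his₁, hiA, hiB,
        if_neg, if_pos, or_false, false_and]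
      simp [his₁, hiA, hiB]
    · by_cases hxB : x ∈ B
      · have hxs₁ : x ∉ s₁ := fun h => hBU x hxB (hs₁U h)
        have hxA : x ∉ A := fun h => hxs₁ (hAs h)
        simp [hxi, hxB, hxs₁, hxA]
        decide
      · by_cases hxA : x ∈ A
        · have hxs₁ : x ∈ s₁ := hAs hxA
          simp [hxi, hxB, hxA, hxs₁]
          decide
        · by_cases hx1 : x ∈ s₁
          · simp [hxi, hxB, hxA, hx1]
            decide
          · simp [hxi, hxB, hxA, hx1]
  have hbase : v + indic s₁ + indic (insert i (A ∪ B)) + indic ((s₁ \ A) ∪ B)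
      = v + indic ({i} : Finset (Fin d)) := by
    rw [← hkey]; abel
  have r3 := (ReachLe.of_adj adj3).congr (cubeVtx_congr _ hF hF₃eq hbase)
  exact ReachLe.cons adj1 (ReachLe.cons adj2 r3)

lemma reach_flip {F : Finset (Finset (Fin d))} (hF : F ∈ Dfam d k m)
    (hm : 1 ≤ m) (hk : 3 ≤ k) (hkodd : Odd k)
    (hroom : k * m + 2 * k + 1 ≤ d) (i : Fin d) (v : Vtx d) :
    ReachLe d k m 5 (cubeVtx hF v) (cubeVtx hF (v + indic {i})) := by
  have hk1 : 1 ≤ k := by omega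
  by_cases hi : ∀ f ∈ F, i ∉ f
  · exact (reach_flip_core hF hm hk hkodd hroom i hi v).mono (by omega)
  push_neg at hi
  obtain ⟨g, hgF, hig⟩ := hi
  have hUcard := Dfam_biUnion_card hF
  obtain ⟨g', hg'k, hg'd⟩ := exists_fresh_set (insert i (F.biUnion id)) k (by
    have := Finset.card_insert_le i (F.biUnion id)
    omega)
  have hg'U : ∀ x ∈ g', x ∉ F.biUnion id := fun x hx hxU =>
    Finset.disjoint_left.mp hg'd hx (mem_insert_of_mem hxU)
  have hig' : i ∉ g' := fun hx => Finset.disjoint_left.mp hg'd hx (mem_insert_self _ _)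
  have hd1 : ∀ f ∈ F.erase g, Disjoint g' f := by
    intro f hf
    rw [Finset.disjoint_left]
    intro x hx hxf
    exact hg'U x hx (mem_biUnion.mpr ⟨f, mem_of_mem_erase hf, hxf⟩)
  have hne1 : g' ≠ g := fun h => hig' (h ▸ hig)
  have adj1 := swap_adj hF hgF hg'k hk1 hd1 hne1 v v (Or.inl rfl)
  have hF' : insert g' (F.erase g) ∈ Dfam d k m := Dfam_insert hF hgF hg'k hk1 hd1
  have hi' : ∀ f ∈ insert g' (F.erase g), i ∉ f := by
    intro f hf
    rcases mem_insert.mp hf with rfl | hf'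
    · exact hig'
    · exact fun hmem => Finset.disjoint_left.mp
        (hF.2.2 g hgF f (mem_of_mem_erase hf') (ne_of_mem_erase hf').symm) hig hmem
  have hroom' : k * m + 2 * k + 1 ≤ d := hroom
  have core := reach_flip_core hF' hm hk hkodd hroom' i hi' v
  have hg'ne : g'.Nonempty := card_pos.mp (by omega)
  have hg'notin : g' ∉ F.erase g := not_mem_of_disjoint hd1 hg'ne
  have herase : (insert g' (F.erase g)).erase g' = F.erase g := Finset.erase_insert hg'notin
  have hd2 : ∀ f ∈ (insert g' (F.erase g)).erase g', Disjoint g f := by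
    rw [herase]
    intro f hf
    exact hF.2.2 g hgF f (mem_of_mem_erase hf) (ne_of_mem_erase hf).symm
  have adj2 := swap_adj hF' (mem_insert_self _ _) (hF.2.1 g hgF) hk1 hd2 hne1.symm
    (v + indic ({i} : Finset (Fin d))) (v + indic ({i} : Finset (Fin d))) (Or.inl rfl)
  have hFeq : insert g ((insert g' (F.erase g)).erase g') = F := by
    rw [herase, Finset.insert_erase hgF]
  have r2 := (ReachLe.of_adj adj2).congr (cubeVtx_congr _ hF hFeq rfl)
  exact ReachLe.cons adj1 (core.trans r2)

lemma reach_base {F : Finset (Finset (Fin d))} (hF : F ∈ Dfam d k m)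
    (hm : 1 ≤ m) (hk : 3 ≤ k) (hkodd : Odd k)
    (hroom : k * m + 2 * k + 1 ≤ d) (S : Finset (Fin d)) :
    ∀ v : Vtx d, ReachLe d k m (5 * S.card) (cubeVtx hF v) (cubeVtx hF (v + indic S)) := by
  induction S using Finset.induction_on with
  | empty =>
    intro v
    rw [indic_empty, add_zero]
    exact ReachLe.refl _ _
  | @insert i S hiS ih =>
    intro v
    have hset : symmDiff S ({i} : Finset (Fin d)) = insert i S := by
      ext x
      rw [Finset.mem_symmDiff]
      simp only [Finset.mem_singleton, Finset.mem_insert]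
      constructor
      · rintro (⟨hx, _⟩ | ⟨rfl, _⟩)
        · exact Or.inr hx
        · exact Or.inl rfl
      · rintro (rfl | hx)
        · exact Or.inr ⟨rfl, hiS⟩
        · exact Or.inl ⟨hx, fun h => hiS (h ▸ hx)⟩
    have h1 : indic (insert i S) = indic S + indic ({i} : Finset (Fin d)) := by
      rw [indic_add, hset]
    have h2 : v + indic (insert i S) = (v + indic S) + indic ({i} : Finset (Fin d)) := by
      rw [h1, add_assoc]
    rw [h2]
    exact ((ih v).trans (reach_flip hF hm hk hkodd hroom i (v + indic S))).mono
      (by rw [card_insert_of_notMem hiS]; omega)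

lemma reach_base' {F : Finset (Finset (Fin d))} (hF : F ∈ Dfam d k m)
    (hm : 1 ≤ m) (hk : 3 ≤ k) (hkodd : Odd k)
    (hroom : k * m + 2 * k + 1 ≤ d) (v v' : Vtx d) :
    ReachLe d k m (5 * d) (cubeVtx hF v) (cubeVtx hF v') := by
  classical
  set S := Finset.univ.filter (fun i => v i ≠ v' i) with hS
  have hv : v + indic S = v' := by
    funext i
    by_cases h : v i = v' i
    · have hnm : i ∉ S := by simp [hS, h]
      have h0 : indic S i = 0 := by simp [indic, hnm]
      show v i + indic S i = v' i
      rw [h0, add_zero, h]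
    · have hmem : i ∈ S := by simp [hS, h]
      have h1 : indic S i = 1 := by simp [indic, hmem]
      show v i + indic S i = v' i
      rw [h1]
      have hz : ∀ a b : ZMod 2, a ≠ b → a + 1 = b := by decide
      exact hz _ _ h
  have h := reach_base hF hm hk hkodd hroom S v
  rw [hv] at h
  refine h.mono ?_
  have hcard : S.card ≤ d := by
    have := Finset.card_le_univ S
    simpa using this
  omega

lemma reach_main (hk : 3 ≤ k) (hkodd : Odd k) (hd3 : d = 3 * k ^ 2 * m) (hm : 1 ≤ m)
    {D D' : Finset (Finset (Fin d))} (hD : D ∈ Dfam d k m) (hD' : D' ∈ Dfam d k m)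
    (v v' : Vtx d) :
    ReachLe d k m (4 * k * d) (cubeVtx hD v) (cubeVtx hD' v') := by
  have hk1 : 1 ≤ k := by omega
  have hkm : k * m + k * m + k * m ≤ d := by nlinarith
  have hScard : (D.biUnion id ∪ D'.biUnion id).card + k * m ≤ d := by
    have h1 := Dfam_biUnion_card hD
    have h2 := Dfam_biUnion_card hD'
    have h3 := Finset.card_union_le (D.biUnion id) (D'.biUnion id)
    omega
  obtain ⟨F, hF, hFS⟩ := exists_fresh_family _ hk1 m hScard
  have hDF : ∀ e ∈ D, ∀ f ∈ F, Disjoint e f := fun e he f hf =>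
    ((hFS f hf).mono_right ((Finset.subset_biUnion_of_mem id he).trans
      Finset.subset_union_left)).symm
  have hD'F : ∀ e ∈ D', ∀ f ∈ F, Disjoint e f := fun e he f hf =>
    ((hFS f hf).mono_right ((Finset.subset_biUnion_of_mem id he).trans
      Finset.subset_union_right)).symm
  have hroom : k * m + 2 * k + 1 ≤ d := by nlinarith
  have r1 := reach_family hD hF hk1 hDF v
  have r2 := reach_base' hF hm hk hkodd hroom v v'
  have r3 := (reach_family hD' hF hk1 hD'F v').symm
  have hall := (r1.trans r2).trans r3
  refine hall.mono ?_
  have hmd : m ≤ d := by nlinarith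
  nlinarith

end AuxP

section AuxQ
open Finset
variable {d k m : ℕ}

lemma exists_perm_image : ∀ (n : ℕ) (P Q : Finset (Fin d)), Disjoint P Q → P.card = n → Q.card = n →
    ∃ π : Equiv.Perm (Fin d), P.image ⇑π = Q ∧ ∀ x, x ∉ P → x ∉ Q → π x = x := by
  intro n
  induction n with
  | zero =>
    intro P Q _ hP hQ
    rw [card_eq_zero] at hP hQ
    subst hP; subst hQ
    exact ⟨1, by simp, fun x _ _ => rfl⟩
  | succ n ih =>
    intro P Q hdisj hP hQ
    obtain ⟨a, ha⟩ := card_pos.mp (by omega : 0 < P.card)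
    obtain ⟨b, hb⟩ := card_pos.mp (by omega : 0 < Q.card)
    obtain ⟨π', h1, h2⟩ := ih (P.erase a) (Q.erase b)
      (hdisj.mono (erase_subset _ _) (erase_subset _ _))
      (by rw [card_erase_of_mem ha, hP]; omega) (by rw [card_erase_of_mem hb, hQ]; omega)
    have haQ : a ∉ Q := Finset.disjoint_left.mp hdisj ha
    have hbP : b ∉ P := Finset.disjoint_right.mp hdisj hb
    have hπa : π' a = a := h2 a (notMem_erase a P) (fun h => haQ (mem_of_mem_erase h))
    refine ⟨π'.trans (Equiv.swap a b), ?_, ?_⟩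
    · rw [Equiv.coe_trans, ← Finset.image_image]
      have himgP : P.image ⇑π' = insert a (Q.erase b) := by
        conv_lhs => rw [← insert_erase ha]
        rw [image_insert, hπa, h1]
      rw [himgP, image_insert, Equiv.swap_apply_left]
      have hfix : (Q.erase b).image ⇑(Equiv.swap a b) = Q.erase b := by
        rw [Finset.image_congr (g := id) ?_, Finset.image_id]
        intro x hx
        exact Equiv.swap_apply_of_ne_of_ne
          (fun h => haQ (by rw [← h]; exact mem_of_mem_erase hx))
          (ne_of_mem_erase hx)
      rw [hfix, insert_erase hb]
    · intro x hxP hxQ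
      rw [Equiv.trans_apply,
        h2 x (fun h => hxP (mem_of_mem_erase h)) (fun h => hxQ (mem_of_mem_erase h)),
        Equiv.swap_apply_of_ne_of_ne (fun h => hxP (by rw [h]; exact ha))
          (fun h => hxQ (by rw [h]; exact hb))]

lemma exists_perm_blocks : ∀ (n : ℕ) (G G' : Finset (Finset (Fin d))),
    G.card = n → G'.card = n →
    (∀ e ∈ G, ∀ f ∈ G, e ≠ f → Disjoint e f) →
    (∀ e ∈ G', ∀ f ∈ G', e ≠ f → Disjoint e f) →
    (∀ e ∈ G, ∀ f ∈ G', e.card = f.card) →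
    ∃ σ : Equiv.Perm (Fin d), G.image (Finset.image ⇑σ) = G' := by
  intro n
  induction n with
  | zero =>
    intro G G' hG hG' _ _ _
    rw [card_eq_zero] at hG hG'
    subst hG; subst hG'
    exact ⟨1, by simp⟩
  | succ n ih =>
    intro G G' hG hG' hd1 hd2 hcards
    obtain ⟨e, he⟩ := card_pos.mp (by omega : 0 < G.card)
    obtain ⟨e', he'⟩ := card_pos.mp (by omega : 0 < G'.card)
    obtain ⟨σ₀, hσ₀⟩ := ih (G.erase e) (G'.erase e')
      (by rw [card_erase_of_mem he, hG]; omega)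
      (by rw [card_erase_of_mem he', hG']; omega)
      (fun f hf g hg => hd1 f (mem_of_mem_erase hf) g (mem_of_mem_erase hg))
      (fun f hf g hg => hd2 f (mem_of_mem_erase hf) g (mem_of_mem_erase hg))
      (fun f hf g hg => hcards f (mem_of_mem_erase hf) g (mem_of_mem_erase hg))
    have hAcard : (e.image ⇑σ₀).card = e'.card := by
      rw [Finset.card_image_of_injective _ σ₀.injective]
      exact hcards e he e' he'
    have hAdisj : ∀ f' ∈ G'.erase e', Disjoint (e.image ⇑σ₀) f' := by
      intro f' hf'
      have hf'' : f' ∈ (G.erase e).image (Finset.image ⇑σ₀) := hσ₀ ▸ hf'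
      obtain ⟨f, hf, rfl⟩ := mem_image.mp hf''
      rw [Finset.disjoint_left]
      intro x hx hx'
      obtain ⟨y, hy, rfl⟩ := mem_image.mp hx
      obtain ⟨z, hz, hzeq⟩ := mem_image.mp hx'
      have hzy : z = y := σ₀.injective hzeq
      subst hzy
      exact Finset.disjoint_left.mp (hd1 e he f (mem_of_mem_erase hf)
        (fun hef => (notMem_erase e G) (hef ▸ hf))) hy hz
    obtain ⟨π, hπ1, hπ2⟩ := exists_perm_image ((e.image ⇑σ₀) \ e').card
      ((e.image ⇑σ₀) \ e') (e' \ (e.image ⇑σ₀)) disjoint_sdiff_sdiff rfl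
      (Finset.card_sdiff_comm hAcard).symm
    refine ⟨σ₀.trans π, ?_⟩
    have himge : e.image ⇑(σ₀.trans π) = e' := by
      rw [Equiv.coe_trans, ← Finset.image_image]
      have hsplit : e.image ⇑σ₀ = (e.image ⇑σ₀) \ e' ∪ (e.image ⇑σ₀) ∩ e' :=
        (Finset.sdiff_union_inter _ _).symm
      rw [hsplit, Finset.image_union, hπ1]
      have hfix : ((e.image ⇑σ₀) ∩ e').image ⇑π = (e.image ⇑σ₀) ∩ e' := by
        rw [Finset.image_congr (g := id) ?_, Finset.image_id]
        intro x hx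
        exact hπ2 x (fun h => (mem_sdiff.mp h).2 (mem_inter.mp hx).2)
          (fun h => (mem_sdiff.mp h).2 (mem_inter.mp hx).1)
      rw [hfix]
      have : e' \ (e.image ⇑σ₀) ∪ (e.image ⇑σ₀) ∩ e'
          = e' \ (e.image ⇑σ₀) ∪ e' ∩ (e.image ⇑σ₀) := by rw [Finset.inter_comm]
      rw [this, Finset.sdiff_union_inter]
    have himgf : ∀ f ∈ G.erase e, f.image ⇑(σ₀.trans π) = f.image ⇑σ₀ := by
      intro f hf
      rw [Equiv.coe_trans, ← Finset.image_image]
      have hf' : f.image ⇑σ₀ ∈ G'.erase e' := hσ₀ ▸ mem_image_of_mem _ hf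
      rw [Finset.image_congr (g := id) ?_, Finset.image_id]
      intro x hx
      apply hπ2
      · intro hmem
        exact Finset.disjoint_left.mp (hAdisj _ hf') (mem_sdiff.mp hmem).1 hx
      · intro hmem
        exact Finset.disjoint_left.mp
          (hd2 e' he' _ (mem_of_mem_erase hf')
            (fun hh => notMem_erase e' G' (hh ▸ hf'))) (mem_sdiff.mp hmem).1 hx
    conv_lhs => rw [← insert_erase he]
    rw [image_insert, himge]
    have hrest : (G.erase e).image (Finset.image ⇑(σ₀.trans π))
        = (G.erase e).image (Finset.image ⇑σ₀) :=
      Finset.image_congr (fun f hf => himgf f hf)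
    rw [hrest, hσ₀, insert_erase he']

end AuxQ

section AuxR
open Finset
variable {d k m : ℕ}

def AffMap {d : ℕ} (σ : Equiv.Perm (Fin d)) (w : Vtx d) : Vtx d ≃ Vtx d where
  toFun v := (fun i => v (σ.symm i)) + w
  invFun u := fun i => (u + w) (σ i)
  left_inv v := funext fun i => by
    show (v (σ.symm (σ i)) + w (σ i)) + w (σ i) = v i
    rw [Equiv.symm_apply_apply]
    exact (by decide : ∀ a b : ZMod 2, a + b + b = a) _ _
  right_inv u := funext fun i => by
    show u (σ (σ.symm i)) + w (σ (σ.symm i)) + w i = u i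
    rw [Equiv.apply_symm_apply]
    exact (by decide : ∀ a b : ZMod 2, a + b + b = a) _ _

lemma AffMap_apply {σ : Equiv.Perm (Fin d)} {w v : Vtx d} (i : Fin d) :
    AffMap σ w v i = v (σ.symm i) + w i := rfl

lemma AffMap_symm_coe (σ : Equiv.Perm (Fin d)) (w : Vtx d) :
    ⇑(AffMap σ w).symm = ⇑(AffMap σ.symm (fun i => w (σ i))) := by
  funext u i
  rfl

lemma perm_indic (σ : Equiv.Perm (Fin d)) (e : Finset (Fin d)) :
    (fun i => indic e (σ.symm i)) = indic (e.image ⇑σ) := by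
  funext i
  simp only [indic]
  by_cases h : σ.symm i ∈ e
  · rw [if_pos h, if_pos (mem_image.mpr ⟨σ.symm i, h, σ.apply_symm_apply i⟩)]
  · rw [if_neg h, if_neg ?_]
    intro hc
    obtain ⟨y, hy, rfl⟩ := mem_image.mp hc
    rw [Equiv.symm_apply_apply] at h
    exact h hy

lemma AffMap_base (σ : Equiv.Perm (Fin d)) (w : Vtx d) (I : Finset (Finset (Fin d)))
    (v : Vtx d) :
    AffMap σ w (v + ∑ e ∈ I, indic e)
      = AffMap σ w v + ∑ e ∈ I, indic (e.image ⇑σ) := by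
  funext i
  show (v + ∑ e ∈ I, indic e) (σ.symm i) + w i
      = ((AffMap σ w) v + ∑ e ∈ I, indic (e.image ⇑σ)) i
  have h3 : ∑ e ∈ I, indic e (σ.symm i) = ∑ e ∈ I, indic (e.image ⇑σ) i :=
    Finset.sum_congr rfl (fun e _ => congrFun (perm_indic σ e) i)
  rw [Pi.add_apply, Pi.add_apply, Finset.sum_apply, Finset.sum_apply, AffMap_apply, h3]
  ring

lemma sum_indic_image (σ : Equiv.Perm (Fin d)) (I : Finset (Finset (Fin d))) :
    ∑ e' ∈ I.image (Finset.image ⇑σ), indic e' = ∑ e ∈ I, indic (e.image ⇑σ) :=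
  Finset.sum_image (fun x _ y _ hxy => Finset.image_injective σ.injective hxy)

lemma AffMap_QV (σ : Equiv.Perm (Fin d)) (w : Vtx d) (D : Finset (Finset (Fin d)))
    (v : Vtx d) :
    ⇑(AffMap σ w) '' QV D v = QV (D.image (Finset.image ⇑σ)) (AffMap σ w v) := by
  ext u
  constructor
  · rintro ⟨x, ⟨I, hI, rfl⟩, rfl⟩
    exact ⟨I.image (Finset.image ⇑σ), Finset.image_subset_image hI,
      by rw [AffMap_base, sum_indic_image]⟩
  · rintro ⟨J, hJ, rfl⟩
    obtain ⟨I, hI, rfl⟩ := Finset.subset_image_iff.mp hJ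
    exact ⟨v + ∑ e ∈ I, indic e, ⟨I, hI, rfl⟩, by rw [AffMap_base, sum_indic_image]⟩

lemma AffMap_sum_eq (σ : Equiv.Perm (Fin d)) (w : Vtx d) (u u' : Vtx d) :
    AffMap σ w u + AffMap σ w u' = fun i => (u + u') (σ.symm i) := by
  funext i
  show (u (σ.symm i) + w i) + (u' (σ.symm i) + w i) = u (σ.symm i) + u' (σ.symm i)
  exact (by decide : ∀ a b c : ZMod 2, (a + c) + (b + c) = a + b) _ _ _

lemma AffMap_QAdj_iff (σ : Equiv.Perm (Fin d)) (w : Vtx d) (D : Finset (Finset (Fin d)))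
    (v u u' : Vtx d) :
    QAdj (D.image (Finset.image ⇑σ)) (AffMap σ w v) (AffMap σ w u) (AffMap σ w u')
      ↔ QAdj D v u u' := by
  constructor
  · rintro ⟨h1, h2, e'', he'', hsum⟩
    obtain ⟨e, he, rfl⟩ := mem_image.mp he''
    rw [← AffMap_QV] at h1 h2
    refine ⟨(AffMap σ w).injective.mem_set_image.mp h1,
      (AffMap σ w).injective.mem_set_image.mp h2, e, he, ?_⟩
    rw [AffMap_sum_eq, ← perm_indic] at hsum
    funext j
    have := congrFun hsum (σ j)
    rwa [Equiv.symm_apply_apply] at this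
  · rintro ⟨h1, h2, e, he, hsum⟩
    refine ⟨by rw [← AffMap_QV]; exact Set.mem_image_of_mem _ h1,
      by rw [← AffMap_QV]; exact Set.mem_image_of_mem _ h2,
      e.image ⇑σ, mem_image_of_mem _ he, ?_⟩
    rw [AffMap_sum_eq, hsum, perm_indic]

lemma AffMap_Qedges (σ : Equiv.Perm (Fin d)) (w : Vtx d) (D : Finset (Finset (Fin d)))
    (v : Vtx d) :
    Sym2.map ⇑(AffMap σ w) '' Qedges D v
      = Qedges (D.image (Finset.image ⇑σ)) (AffMap σ w v) := by
  ext z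
  constructor
  · rintro ⟨z', ⟨u, u', rfl, hne, hadj⟩, rfl⟩
    exact ⟨AffMap σ w u, AffMap σ w u', by rw [Sym2.map_pair_eq],
      fun h => hne ((AffMap σ w).injective h),
      (AffMap_QAdj_iff σ w D v u u').mpr hadj⟩
  · rintro ⟨a, b, rfl, hne, hadj⟩
    refine ⟨s((AffMap σ w).symm a, (AffMap σ w).symm b),
      ⟨(AffMap σ w).symm a, (AffMap σ w).symm b, rfl,
        fun h => hne (by rw [← (AffMap σ w).apply_symm_apply a,
          ← (AffMap σ w).apply_symm_apply b, h]), ?_⟩, ?_⟩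
    · apply (AffMap_QAdj_iff σ w D v _ _).mp
      rwa [(AffMap σ w).apply_symm_apply, (AffMap σ w).apply_symm_apply]
    · rw [Sym2.map_pair_eq, (AffMap σ w).apply_symm_apply, (AffMap σ w).apply_symm_apply]

lemma Dfam_image {D : Finset (Finset (Fin d))} (hD : D ∈ Dfam d k m)
    (σ : Equiv.Perm (Fin d)) : D.image (Finset.image ⇑σ) ∈ Dfam d k m := by
  refine ⟨?_, ?_, ?_⟩
  · rw [Finset.card_image_of_injective _ (Finset.image_injective σ.injective), hD.1]
  · intro e'' he''
    obtain ⟨e, he, rfl⟩ := mem_image.mp he''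
    rw [Finset.card_image_of_injective _ σ.injective]
    exact hD.2.1 e he
  · intro e'' he'' f'' hf'' hne
    obtain ⟨e, he, rfl⟩ := mem_image.mp he''
    obtain ⟨f, hf, rfl⟩ := mem_image.mp hf''
    have hef : e ≠ f := fun h => hne (h ▸ rfl)
    rw [Finset.disjoint_left]
    intro x hx hx'
    obtain ⟨y, hy, rfl⟩ := mem_image.mp hx
    obtain ⟨z, hz, hzeq⟩ := mem_image.mp hx'
    have : z = y := σ.injective hzeq
    subst this
    exact Finset.disjoint_left.mp (hD.2.2 e he f hf hef) hy hz

end AuxR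

section AuxS
open Finset
variable {d k m : ℕ}

def cubeMapFun (σ : Equiv.Perm (Fin d)) (w : Vtx d) (H : ↥(CubeFam d k m)) :
    ↥(CubeFam d k m) :=
  ⟨(⇑(AffMap σ w) '' H.1.1, Sym2.map ⇑(AffMap σ w) '' H.1.2), by
    obtain ⟨D, hD, v, h1, h2⟩ := H.2
    refine ⟨D.image (Finset.image ⇑σ), Dfam_image hD σ, AffMap σ w v, ?_, ?_⟩
    · show ⇑(AffMap σ w) '' H.1.1 = _
      rw [h1, AffMap_QV]
    · show Sym2.map ⇑(AffMap σ w) '' H.1.2 = _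
      rw [h2, AffMap_Qedges]⟩

lemma comp_id_vtx (σ : Equiv.Perm (Fin d)) (w : Vtx d) :
    ⇑(AffMap σ.symm (fun i => w (σ i))) ∘ ⇑(AffMap σ w) = id := by
  rw [← AffMap_symm_coe]
  exact Equiv.symm_comp_self _

lemma comp_id_vtx' (σ : Equiv.Perm (Fin d)) (w : Vtx d) :
    ⇑(AffMap σ w) ∘ ⇑(AffMap σ.symm (fun i => w (σ i))) = id := by
  rw [← AffMap_symm_coe]
  exact Equiv.self_comp_symm _

lemma sym2_comp_id (f g : Vtx d → Vtx d) (h : f ∘ g = id) :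
    Sym2.map f ∘ Sym2.map g = id := by
  funext z
  rw [Function.comp_apply, Sym2.map_map, h, Sym2.map_id, id_eq]

lemma cubeMap_cancel (σ : Equiv.Perm (Fin d)) (w : Vtx d) (H : ↥(CubeFam d k m)) :
    cubeMapFun σ.symm (fun i => w (σ i)) (cubeMapFun σ w H) = H := by
  apply Subtype.ext
  apply Prod.ext
  · show ⇑(AffMap σ.symm _) '' (⇑(AffMap σ w) '' H.1.1) = H.1.1
    rw [← Set.image_comp, comp_id_vtx, Set.image_id]
  · show Sym2.map ⇑(AffMap σ.symm _) '' (Sym2.map ⇑(AffMap σ w) '' H.1.2) = H.1.2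
    rw [← Set.image_comp, sym2_comp_id _ _ (comp_id_vtx σ w), Set.image_id]

lemma cubeMap_cancel' (σ : Equiv.Perm (Fin d)) (w : Vtx d) (H : ↥(CubeFam d k m)) :
    cubeMapFun σ w (cubeMapFun σ.symm (fun i => w (σ i)) H) = H := by
  apply Subtype.ext
  apply Prod.ext
  · show ⇑(AffMap σ w) '' (⇑(AffMap σ.symm _) '' H.1.1) = H.1.1
    rw [← Set.image_comp, comp_id_vtx', Set.image_id]
  · show Sym2.map ⇑(AffMap σ w) '' (Sym2.map ⇑(AffMap σ.symm _) '' H.1.2) = H.1.2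
    rw [← Set.image_comp, sym2_comp_id _ _ (comp_id_vtx' σ w), Set.image_id]

def cubeEquiv (σ : Equiv.Perm (Fin d)) (w : Vtx d) :
    ↥(CubeFam d k m) ≃ ↥(CubeFam d k m) where
  toFun := cubeMapFun σ w
  invFun := cubeMapFun σ.symm (fun i => w (σ i))
  left_inv := cubeMap_cancel σ w
  right_inv := cubeMap_cancel' σ w

lemma cubeMap_injective (σ : Equiv.Perm (Fin d)) (w : Vtx d)
    {H H' : ↥(CubeFam d k m)} (h : cubeMapFun σ w H = cubeMapFun σ w H') : H = H' := by
  have := congrArg (cubeMapFun σ.symm (fun i => w (σ i))) h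
  rwa [cubeMap_cancel, cubeMap_cancel] at this

lemma cubeMap_inter_ncard (σ : Equiv.Perm (Fin d)) (w : Vtx d)
    (H H' : ↥(CubeFam d k m)) :
    ((cubeMapFun σ w H).1.1 ∩ (cubeMapFun σ w H').1.1).ncard
      = (H.1.1 ∩ H'.1.1).ncard := by
  show (⇑(AffMap σ w) '' H.1.1 ∩ ⇑(AffMap σ w) '' H'.1.1).ncard = _
  rw [← Set.image_inter (AffMap σ w).injective,
    Set.ncard_image_of_injective _ (AffMap σ w).injective]

def GsquareIso (σ : Equiv.Perm (Fin d)) (w : Vtx d) :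
    Gsquare d k m ≃g Gsquare d k m where
  toEquiv := cubeEquiv σ w
  map_rel_iff' := by
    intro H H'
    show ((cubeMapFun σ w H ≠ cubeMapFun σ w H') ∧
        ((cubeMapFun σ w H).1.1 ∩ (cubeMapFun σ w H').1.1).ncard = 2 ^ (m-1))
      ↔ ((H ≠ H') ∧ (H.1.1 ∩ H'.1.1).ncard = 2 ^ (m-1))
    rw [cubeMap_inter_ncard]
    constructor
    · rintro ⟨hne, hc⟩
      exact ⟨fun h => hne (h ▸ rfl), hc⟩
    · rintro ⟨hne, hc⟩
      exact ⟨fun h => hne (cubeMap_injective σ w h), hc⟩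

lemma Gsquare_trans (H H' : ↥(CubeFam d k m)) :
    ∃ φ : Gsquare d k m ≃g Gsquare d k m, φ H = H' := by
  obtain ⟨D, hD, v, h1, h2⟩ := H.2
  obtain ⟨D', hD', v', h1', h2'⟩ := H'.2
  obtain ⟨σ, hσ⟩ := exists_perm_blocks m D D' hD.1 hD'.1 hD.2.2 hD'.2.2
    (fun e he f hf => by rw [hD.2.1 e he, hD'.2.1 f hf])
  refine ⟨GsquareIso σ (v' + fun i => v (σ.symm i)), ?_⟩
  have hbase : AffMap σ (v' + fun i => v (σ.symm i)) v = v' := by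
    funext i
    show v (σ.symm i) + (v' i + v (σ.symm i)) = v' i
    exact (by decide : ∀ a b : ZMod 2, a + (b + a) = b) _ _
  apply Subtype.ext
  apply Prod.ext
  · show ⇑(AffMap σ _) '' H.1.1 = H'.1.1
    rw [h1, h1', AffMap_QV, hσ, hbase]
  · show Sym2.map ⇑(AffMap σ _) '' H.1.2 = H'.1.2
    rw [h2, h2', AffMap_Qedges, hσ, hbase]

end AuxS

/-- **Lemma (the auxiliary graph `G_□`).** For odd `k ≥ 3` and `d = 3k²m` large enough
in terms of `k`, the graph `G_□` is vertex-transitive and connected with diameter at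
most `4kd`. -/
theorem Gsquare_transitive_diameter (k : ℕ) (hk3 : 3 ≤ k) (hkodd : Odd k) :
    ∃ d₀ : ℕ, ∀ d m : ℕ, d₀ ≤ d → d = 3 * k ^ 2 * m →
      (∀ H H' : CubeFam d k m, ∃ φ : Gsquare d k m ≃g Gsquare d k m, φ H = H') ∧
      (Gsquare d k m).Connected ∧
      (∀ H H' : CubeFam d k m, (Gsquare d k m).dist H H' ≤ 4 * k * d) := by
  refine ⟨1, fun d m hd1 hdm => ?_⟩
  have hm : 1 ≤ m := by
    rcases Nat.eq_zero_or_pos m with rfl | h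
    · rw [Nat.mul_zero] at hdm; omega
    · exact h
  have hwalk : ∀ H H' : ↥(CubeFam d k m),
      ∃ p : (Gsquare d k m).Walk H H', p.length ≤ 4 * k * d := by
    intro H H'
    obtain ⟨D, hD, v, h1, h2⟩ := H.2
    obtain ⟨D', hD', v', h1', h2'⟩ := H'.2
    have hHeq : H = cubeVtx hD v := Subtype.ext (Prod.ext h1 h2)
    have hHeq' : H' = cubeVtx hD' v' := Subtype.ext (Prod.ext h1' h2')
    rw [hHeq, hHeq']
    exact reach_main hk3 hkodd hdm hm hD hD' v v'
  refine ⟨fun H H' => Gsquare_trans H H', ?_, ?_⟩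
  · have hkm : k * m ≤ d := by nlinarith
    obtain ⟨D, hD, _⟩ := exists_fresh_family (k := k) (∅ : Finset (Fin d)) (by omega) m
      (by simpa using hkm)
    have hne : Nonempty ↥(CubeFam d k m) := ⟨cubeVtx hD 0⟩
    refine { preconnected := fun H H' => ?_, nonempty := hne }
    obtain ⟨p, _⟩ := hwalk H H'
    exact ⟨p⟩
  · intro H H'
    obtain ⟨p, hp⟩ := hwalk H H'
    exact le_trans (SimpleGraph.dist_le p) hp
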